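/- (Parallel Law) Let V be a finite type, let a, b ∈ V with a ≠ b, and suppose V ∖ {a, b} is partitioned into two disjoint sets S₁ and S₂. Let W₁ and W₂ be weight functions on V such that W₁ x y = 0 unless both x, y ∈ S₁ ∪ {a, b}, and W₂ x y = 0 unless both x, y ∈ S₂ ∪ {a, b}, and set W = W₁ + W₂ (pointwise sum). Then cond(W, a, b) = cond(W₁, a, b) + cond(W₂, a, b). -/
import Mathlib


open Finset

/-- `W` is a weight function on `V`: symmetric, nonnegative, vanishing on the diagonal. -/
def IsWeight {V : Type*} (W : V → V → ℝ) : Prop :=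
  (∀ x y, W x y = W y x) ∧ (∀ x y, 0 ≤ W x y) ∧ (∀ x, W x x = 0)

/-- The energy of a potential `U` in the circuit with conductances `W`. -/
noncomputable def energy {V : Type*} [Fintype V] (W : V → V → ℝ) (U : V → ℝ) : ℝ :=
  (1 / 2) * ∑ x, ∑ y, W x y * (U x - U y) ^ 2

/-- The total conductance of the circuit `(V, W)` with battery `{a, b}`: the
infimum of the energy over all potentials normalized by `U a = 1`, `U b = 0`. -/
noncomputable def totalCond {V : Type*} [Fintype V] (W : V → V → ℝ) (a b : V) : ℝ :=
  sInf (energy W '' {U : V → ℝ | U a = 1 ∧ U b = 0})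

lemma energy_nonneg {V : Type*} [Fintype V] {W : V → V → ℝ} (hW : ∀ x y, 0 ≤ W x y)
    (U : V → ℝ) : 0 ≤ energy W U := by
  unfold energy
  apply mul_nonneg (by norm_num)
  exact Finset.sum_nonneg fun x _ => Finset.sum_nonneg fun y _ =>
    mul_nonneg (hW x y) (sq_nonneg _)

lemma energy_add {V : Type*} [Fintype V] (W₁ W₂ : V → V → ℝ) (U : V → ℝ) :
    energy (fun x y => W₁ x y + W₂ x y) U = energy W₁ U + energy W₂ U := by
  simp only [energy, add_mul, Finset.sum_add_distrib]
  ring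

lemma energy_congr {V : Type*} [Fintype V] {W : V → V → ℝ} {U U' : V → ℝ} {T : Set V}
    (hsupp : ∀ x y, W x y ≠ 0 → x ∈ T ∧ y ∈ T) (h : ∀ x ∈ T, U x = U' x) :
    energy W U = energy W U' := by
  unfold energy
  congr 1
  refine Finset.sum_congr rfl fun x _ => Finset.sum_congr rfl fun y _ => ?_
  by_cases hw : W x y = 0
  · simp [hw]
  · obtain ⟨hx, hy⟩ := hsupp x y hw
    rw [h x hx, h y hy]

/-- Parallel law: the conductance of two circuits plugged in parallel is the sum
of their conductances. -/
theorem parallel_law {V : Type*} [Fintype V]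
    (a b : V) (hab : a ≠ b)
    (S₁ S₂ : Set V) (hdisj : Disjoint S₁ S₂) (hcover : S₁ ∪ S₂ = ({a, b} : Set V)ᶜ)
    (W₁ W₂ : V → V → ℝ) (hW₁ : IsWeight W₁) (hW₂ : IsWeight W₂)
    (hsupp₁ : ∀ x y, W₁ x y ≠ 0 → x ∈ S₁ ∪ {a, b} ∧ y ∈ S₁ ∪ {a, b})
    (hsupp₂ : ∀ x y, W₂ x y ≠ 0 → x ∈ S₂ ∪ {a, b} ∧ y ∈ S₂ ∪ {a, b}) :
    totalCond (fun x y => W₁ x y + W₂ x y) a b = totalCond W₁ a b + totalCond W₂ a b := by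
  classical
  set P : Set (V → ℝ) := {U : V → ℝ | U a = 1 ∧ U b = 0} with hP
  have hPne : P.Nonempty := by
    refine ⟨fun x => if x = a then 1 else 0, ?_, ?_⟩
    · simp
    · simp [Ne.symm hab]
  have hbdd : ∀ (W : V → V → ℝ), (∀ x y, 0 ≤ W x y) → BddBelow (energy W '' P) := by
    intro W hW
    refine ⟨0, ?_⟩
    rintro c ⟨U, _, rfl⟩
    exact energy_nonneg hW U
  have hne : ∀ (W : V → V → ℝ), (energy W '' P).Nonempty := fun W => hPne.image _
  have hW₁n := hW₁.2.1
  have hW₂n := hW₂.2.1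
  have hWn : ∀ x y, 0 ≤ W₁ x y + W₂ x y := fun x y => add_nonneg (hW₁n x y) (hW₂n x y)
  have hS₁c : S₁ ⊆ ({a, b} : Set V)ᶜ := hcover ▸ Set.subset_union_left
  have hS₂c : S₂ ⊆ ({a, b} : Set V)ᶜ := hcover ▸ Set.subset_union_right
  have haS₁ : a ∉ S₁ := fun h => hS₁c h (by simp)
  have hbS₁ : b ∉ S₁ := fun h => hS₁c h (by simp)
  unfold totalCond
  apply le_antisymm
  · rw [← sub_le_iff_le_add']
    refine le_csInf (hne W₂) ?_
    rintro v ⟨U₂, hU₂, rfl⟩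
    rw [sub_le_iff_le_add']
    rw [← sub_le_iff_le_add]
    refine le_csInf (hne W₁) ?_
    rintro u ⟨U₁, hU₁, rfl⟩
    rw [sub_le_iff_le_add]
    -- combine U₁ and U₂
    set U : V → ℝ := fun x => if x ∈ S₁ then U₁ x else if x = a then 1 else if x = b then 0 else U₂ x with hU
    have hUa : U a = 1 := by simp [hU, haS₁]
    have hUb : U b = 0 := by simp [hU, hbS₁, Ne.symm hab]
    have h1 : ∀ x ∈ S₁ ∪ {a, b}, U x = U₁ x := by
      rintro x (hx | hx)
      · simp [hU, hx]
      · rcases hx with rfl | rfl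
        · rw [hUa, hU₁.1]
        · rw [hUb, hU₁.2]
    have h2 : ∀ x ∈ S₂ ∪ {a, b}, U x = U₂ x := by
      rintro x (hx | hx)
      · have hx1 : x ∉ S₁ := fun h => hdisj.ne_of_mem h hx rfl
        have hxa : x ≠ a := fun h => hS₂c hx (by simp [h])
        have hxb : x ≠ b := fun h => hS₂c hx (by simp [h])
        simp [hU, hx1, hxa, hxb]
      · rcases hx with rfl | rfl
        · rw [hUa, hU₂.1]
        · rw [hUb, hU₂.2]
    have hmem : energy (fun x y => W₁ x y + W₂ x y) U ∈
        energy (fun x y => W₁ x y + W₂ x y) '' P := ⟨U, ⟨hUa, hUb⟩, rfl⟩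
    calc sInf (energy (fun x y => W₁ x y + W₂ x y) '' P)
        ≤ energy (fun x y => W₁ x y + W₂ x y) U := csInf_le (hbdd _ hWn) hmem
      _ = energy W₁ U + energy W₂ U := energy_add W₁ W₂ U
      _ = energy W₁ U₁ + energy W₂ U₂ := by
          rw [energy_congr hsupp₁ h1, energy_congr hsupp₂ h2]
  · refine le_csInf (hne _) ?_
    rintro c ⟨U, hU, rfl⟩
    rw [energy_add]
    exact add_le_add (csInf_le (hbdd _ hW₁n) ⟨U, hU, rfl⟩)
      (csInf_le (hbdd _ hW₂n) ⟨U, hU, rfl⟩)
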